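/- arXiv:2503.20145 — 6 statements merged into one kernel-verified Lean document; each statement's English description precedes it below -/
import Mathlib

section
/- Let κ₁>0, κ₋₁≥0, K>0, z_V>0, and let z_C⁻(K,z_V) = ((z_V+K)κ₁ + κ₋₁ − √D(K,z_V))/(2κ₁) with D(K,z_V) = ((z_V+K)κ₁ + κ₋₁)² − 4κ₁²z_V K. Then 0 ≤ z_C⁻(K,z_V) ≤ min(z_V, K). -/
/-!
`z_C⁻` is the smaller root of `f(z) = κ₁ (z_V - z)(K - z) - κ₋₁ z`. Since `f(0) = κ₁ z_V K ≥ 0` and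
the vertex of `f` lies at a nonnegative abscissa, the smaller root is nonnegative; since
`f(min z_V K) = -κ₋₁ min z_V K ≤ 0`, the point `min z_V K` lies between the two roots.
-/

open Real

/-- The smaller root of `κ z² - s z + p`. -/
noncomputable def smallerRoot (κ s p : ℝ) : ℝ := (s - √(s ^ 2 - 4 * κ * p)) / (2 * κ)

variable {κ s p : ℝ}

lemma smallerRoot_nonneg (hκ : 0 < κ) (hs : 0 ≤ s) (hp : 0 ≤ p) : 0 ≤ smallerRoot κ s p := by
  have hsqrt : √(s ^ 2 - 4 * κ * p) ≤ s :=
    sqrt_le_iff.2 ⟨hs, by nlinarith [mul_nonneg hκ.le hp]⟩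
  exact div_nonneg (sub_nonneg.2 hsqrt) (by positivity)

lemma smallerRoot_le_of_eval_nonpos (hκ : 0 < κ) {z : ℝ} (hz : κ * z ^ 2 - s * z + p ≤ 0) :
    smallerRoot κ s p ≤ z := by
  rw [smallerRoot, div_le_iff₀ (by positivity), sub_le_comm]
  exact le_sqrt_of_sq_le (by nlinarith)

theorem stable_root_bounds
    (κ1 κm1 K zV : ℝ) (hκ1 : 0 < κ1) (hκm1 : 0 ≤ κm1) (hK : 0 < K) (hzV : 0 < zV) :
    let D := ((zV + K) * κ1 + κm1) ^ 2 - 4 * κ1 ^ 2 * zV * K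
    let zCm := ((zV + K) * κ1 + κm1 - Real.sqrt D) / (2 * κ1)
    0 ≤ zCm ∧ zCm ≤ min zV K := by
  intro D zCm
  have hzCm : zCm = smallerRoot κ1 ((zV + K) * κ1 + κm1) (κ1 * zV * K) := by
    simp only [zCm, D, smallerRoot]; ring_nf
  have hf : ∀ z, κ1 * z ^ 2 - ((zV + K) * κ1 + κm1) * z + κ1 * zV * K
      = κ1 * ((zV - z) * (K - z)) - κm1 * z := fun z ↦ by ring
  have hmin_root : (zV - min zV K) * (K - min zV K) = 0 := by
    rcases min_choice zV K with h | h <;> simp [h]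
  have hmin_nonneg : 0 ≤ min zV K := le_min hzV.le hK.le
  rw [hzCm]
  refine ⟨smallerRoot_nonneg hκ1 (by positivity) (by positivity),
    smallerRoot_le_of_eval_nonpos hκ1 ?_⟩
  rw [hf, hmin_root, mul_zero, zero_sub, neg_nonpos]
  exact mul_nonneg hκm1 hmin_nonneg
end

section
/- Fix κ₁>0, κ₋₁>0, K>0, z_V>0, and let z_C^±(K,z_V) denote the two roots of κ₁(z_V−z_C)(K−z_C) − κ₋₁z_C = 0. For z_C < z_C⁺(K,z_V), define F(z_V,z_C) = −(1/κ₁)·ln((z_C⁺(K,z_V) − z_C)/(z_C⁺(K,z_V) − z_C⁻(K,z_V))). Then for all z_C ≤ z_V, F solves the Poisson equation (κ₁(z_V − z_C)(K − z_C) − κ₋₁ z_C)·∂F/∂z_C (z_V,z_C) = −(z_C − z_C⁻(K,z_V)), and F(z_V, z_C⁻(K,z_V)) = 0. -/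
theorem poisson_equation_solution
    (κ1 κm1 K zV : ℝ) (hκ1 : 0 < κ1) (hκm1 : 0 < κm1) (hK : 0 < K) (hzV : 0 < zV) :
    let D := ((zV + K) * κ1 + κm1) ^ 2 - 4 * κ1 ^ 2 * zV * K
    let zCm := ((zV + K) * κ1 + κm1 - Real.sqrt D) / (2 * κ1)
    let zCp := ((zV + K) * κ1 + κm1 + Real.sqrt D) / (2 * κ1)
    let F : ℝ → ℝ := fun zC => -(1 / κ1) * Real.log ((zCp - zC) / (zCp - zCm))
    F zCm = 0 ∧
    ∀ zC : ℝ, zC ≤ zV →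
      (κ1 * (zV - zC) * (K - zC) - κm1 * zC) * deriv F zC = -(zC - zCm) := by
  intro D zCm zCp F
  have hDdef : D = ((zV + K) * κ1 + κm1) ^ 2 - 4 * κ1 ^ 2 * zV * K := rfl
  have hmdef : zCm = ((zV + K) * κ1 + κm1 - Real.sqrt D) / (2 * κ1) := rfl
  have hpdef : zCp = ((zV + K) * κ1 + κm1 + Real.sqrt D) / (2 * κ1) := rfl
  have hD : 0 < D := by
    rw [hDdef]
    nlinarith [sq_nonneg ((zV - K) * κ1 + κm1), mul_pos (mul_pos hκ1 hκm1) hK]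
  set s := Real.sqrt D with hsdef
  have hs2 : s ^ 2 = D := Real.sq_sqrt hD.le
  have hs : 0 < s := Real.sqrt_pos.mpr hD
  have hden : zCp - zCm = s / κ1 := by
    rw [hmdef, hpdef]; field_simp; ring
  have hdenpos : 0 < zCp - zCm := by rw [hden]; positivity
  constructor
  · show -(1 / κ1) * Real.log ((zCp - zCm) / (zCp - zCm)) = 0
    rw [div_self (ne_of_gt hdenpos), Real.log_one, mul_zero]
  · intro zC hzC
    have hzVp : zV < zCp := by
      rw [hpdef, lt_div_iff₀ (by positivity)]
      nlinarith [mul_pos (mul_pos hκ1 hκm1) hzV, hs.le]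
    have hzCp : zC < zCp := lt_of_le_of_lt hzC hzVp
    have hne : zCp - zC ≠ 0 := by linarith
    have hF : HasDerivAt F (1 / (κ1 * (zCp - zC))) zC := by
      have h1 : HasDerivAt (fun x => (zCp - x) / (zCp - zCm)) (-1 / (zCp - zCm)) zC := by
        simpa using ((hasDerivAt_id zC).const_sub zCp).div_const (zCp - zCm)
      have hg : (zCp - zC) / (zCp - zCm) ≠ 0 :=
        div_ne_zero hne (ne_of_gt hdenpos)
      have h2 := (h1.log hg).const_mul (-(1 / κ1))
      refine h2.congr_deriv ?_
      have hk : κ1 ≠ 0 := ne_of_gt hκ1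
      have hd : zCp - zCm ≠ 0 := ne_of_gt hdenpos
      field_simp
    rw [hF.deriv]
    have hfac : κ1 * (zV - zC) * (K - zC) - κm1 * zC = -(zC - zCm) * (κ1 * (zCp - zC)) := by
      rw [hmdef, hpdef]
      field_simp
      linear_combination hs2
    rw [hfac]
    field_simp
end

section
/- Fix κ₁>0, κ₋₁>0, K>0, z_V>0 and let F(z_V,z_C) = −(1/κ₁)·ln((z_C⁺(K,z_V) − z_C)/(z_C⁺(K,z_V) − z_C⁻(K,z_V))) on {z_C ≤ z_V}. Then the partial derivative of F with respect to z_C equals 1/(κ₁(z_C⁺(K,z_V) − z_C)) and satisfies 0 < ∂₂F(z_V,z_C) ≤ 2/κ₋₁ for all z_C ≤ z_V. -/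
theorem poisson_solution_first_derivative_bounds
    (κ1 κm1 K zV : ℝ) (hκ1 : 0 < κ1) (hκm1 : 0 < κm1) (hK : 0 < K) (hzV : 0 < zV) :
    let D := ((zV + K) * κ1 + κm1) ^ 2 - 4 * κ1 ^ 2 * zV * K
    let zCm := ((zV + K) * κ1 + κm1 - Real.sqrt D) / (2 * κ1)
    let zCp := ((zV + K) * κ1 + κm1 + Real.sqrt D) / (2 * κ1)
    let F : ℝ → ℝ := fun zC => -(1 / κ1) * Real.log ((zCp - zC) / (zCp - zCm))
    ∀ zC : ℝ, zC ≤ zV →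
      deriv F zC = 1 / (κ1 * (zCp - zC)) ∧
      0 < deriv F zC ∧ deriv F zC ≤ 2 / κm1 := by
  intro D zCm zCp F zC hzC
  have hDeq : D = ((zV - K) * κ1) ^ 2 + 2 * (zV + K) * κ1 * κm1 + κm1 ^ 2 := by
    simp only [D]; ring
  have hDpos : 0 < D := by rw [hDeq]; nlinarith [sq_nonneg ((zV - K) * κ1), mul_pos (mul_pos (by linarith : (0:ℝ) < zV + K) hκ1) hκm1, sq_nonneg κm1]
  have hs2 : Real.sqrt D ^ 2 = D := Real.sq_sqrt hDpos.le
  have hspos : 0 < Real.sqrt D := Real.sqrt_pos.mpr hDpos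
  have hsge : (zV - K) * κ1 ≤ Real.sqrt D := by
    have h1 : ((zV - K) * κ1) ^ 2 ≤ D := by rw [hDeq]; nlinarith [mul_pos (mul_pos (by linarith : (0:ℝ) < zV + K) hκ1) hκm1, sq_nonneg κm1]
    calc (zV - K) * κ1 ≤ |(zV - K) * κ1| := le_abs_self _
    _ = Real.sqrt (((zV - K) * κ1) ^ 2) := (Real.sqrt_sq_eq_abs _).symm
    _ ≤ Real.sqrt D := Real.sqrt_le_sqrt h1
  -- gap bound
  have hgap : κm1 / (2 * κ1) ≤ zCp - zC := by
    have h2κ : (0:ℝ) < 2 * κ1 := by linarith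
    rw [div_le_iff₀ h2κ] at *
    simp only [zCp]
    rw [sub_mul, div_mul_cancel₀ _ h2κ.ne']
    nlinarith
  have hgappos : 0 < zCp - zC := lt_of_lt_of_le (by positivity) hgap
  have hdiff : zCp - zCm = Real.sqrt D / κ1 := by
    simp only [zCp, zCm]; field_simp; ring
  have hdiffpos : 0 < zCp - zCm := by rw [hdiff]; positivity
  -- derivative
  have h1 : HasDerivAt (fun z => (zCp - z) / (zCp - zCm)) (-1 / (zCp - zCm)) zC := by
    exact (((hasDerivAt_id zC).const_sub zCp).div_const _)
  have hne : (zCp - zC) / (zCp - zCm) ≠ 0 := by positivity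
  have h2 := h1.log hne
  have h3 := h2.const_mul (-(1 / κ1))
  have hderiv : deriv F zC = 1 / (κ1 * (zCp - zC)) := by
    rw [h3.deriv]
    field_simp
  refine ⟨hderiv, ?_, ?_⟩
  · rw [hderiv]; positivity
  · rw [hderiv, div_le_div_iff₀ (by positivity) hκm1]
    have := (div_le_iff₀ (by linarith : (0:ℝ) < 2 * κ1)).mp hgap
    nlinarith
end

section
/- Fix κ₁>0, κ₋₁>0, K>0, z_V>0 and let F(z_V,z_C) = −(1/κ₁)·ln((z_C⁺(K,z_V) − z_C)/(z_C⁺(K,z_V) − z_C⁻(K,z_V))) on {z_C ≤ z_V}. Then the second partial derivative of F with respect to z_C equals 1/(κ₁(z_C⁺(K,z_V) − z_C)²) and satisfies 0 < ∂₂²F(z_V,z_C) ≤ 4κ₁/κ₋₁² for all z_C ≤ z_V. -/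
theorem poisson_solution_second_derivative_bounds
    (κ1 κm1 K zV : ℝ) (hκ1 : 0 < κ1) (hκm1 : 0 < κm1) (hK : 0 < K) (hzV : 0 < zV) :
    let D := ((zV + K) * κ1 + κm1) ^ 2 - 4 * κ1 ^ 2 * zV * K
    let zCm := ((zV + K) * κ1 + κm1 - Real.sqrt D) / (2 * κ1)
    let zCp := ((zV + K) * κ1 + κm1 + Real.sqrt D) / (2 * κ1)
    let F : ℝ → ℝ := fun zC => -(1 / κ1) * Real.log ((zCp - zC) / (zCp - zCm))
    ∀ zC : ℝ, zC ≤ zV →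
      deriv (deriv F) zC = 1 / (κ1 * (zCp - zC) ^ 2) ∧
      0 < deriv (deriv F) zC ∧ deriv (deriv F) zC ≤ 4 * κ1 / κm1 ^ 2 := by
  intro D zCm zCp F zC hzC
  have hD : 0 < D := by
    have h : D = ((zV - K) * κ1 + κm1) ^ 2 + 4 * K * κ1 * κm1 := by
      simp only [D]; ring
    rw [h]; positivity
  have hsq : Real.sqrt D ^ 2 = D := Real.sq_sqrt hD.le
  have hsnn : 0 ≤ Real.sqrt D := Real.sqrt_nonneg D
  have hspos : 0 < Real.sqrt D := Real.sqrt_pos.mpr hD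
  have hsq' : Real.sqrt D ^ 2 = ((zV + K) * κ1 + κm1) ^ 2 - 4 * κ1 ^ 2 * zV * K := hsq
  have hkey : (zV - K) * κ1 ≤ Real.sqrt D := by
    rcases le_or_gt ((zV - K) * κ1) 0 with ha | ha
    · exact ha.trans hsnn
    · rw [Real.le_sqrt' ha]
      show ((zV - K) * κ1) ^ 2 ≤ ((zV + K) * κ1 + κm1) ^ 2 - 4 * κ1 ^ 2 * zV * K
      nlinarith [mul_pos hκ1 hκm1, mul_pos hzV (mul_pos hκ1 hκm1), mul_pos hK (mul_pos hκ1 hκm1)]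
  have hgap : ∀ z : ℝ, z ≤ zV → κm1 / (2 * κ1) ≤ zCp - z := by
    intro z hz
    have hrw : zCp - z = ((zV + K) * κ1 + κm1 + Real.sqrt D - 2 * κ1 * z) / (2 * κ1) := by
      simp only [zCp]; field_simp
    rw [hrw]
    gcongr <;> nlinarith [hkey]
  have hgap0 : 0 < κm1 / (2 * κ1) := by positivity
  have hposC : 0 < zCp - zC := lt_of_lt_of_le hgap0 (hgap zC hzC)
  have hzCp : zC < zCp := by linarith
  have hdm : 0 < zCp - zCm := by
    have : zCp - zCm = Real.sqrt D / κ1 := by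
      simp only [zCp, zCm]; field_simp; ring
    rw [this]; positivity
  -- first derivative
  have hF' : ∀ z ∈ Set.Iio zCp, HasDerivAt F (1 / (κ1 * (zCp - z))) z := by
    intro z hz
    have h1 : (0:ℝ) < zCp - z := sub_pos.mpr hz
    have h2 : HasDerivAt (fun w => (zCp - w) / (zCp - zCm)) (-1 / (zCp - zCm)) z := by
      have := ((hasDerivAt_id z).const_sub zCp).div_const (zCp - zCm)
      simpa using this
    have h3 : ((zCp - z) / (zCp - zCm)) ≠ 0 := by positivity
    have h4 := (h2.log h3).const_mul (-(1 / κ1))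
    have heq : -(1 / κ1) * (-1 / (zCp - zCm) / ((zCp - z) / (zCp - zCm))) =
        1 / (κ1 * (zCp - z)) := by
      field_simp
    rw [heq] at h4
    exact h4
  have hev : deriv F =ᶠ[nhds zC] (fun z => 1 / (κ1 * (zCp - z))) := by
    filter_upwards [Iio_mem_nhds hzCp] with z hz
    exact (hF' z hz).deriv
  have hne : κ1 * (zCp - zC) ≠ 0 := by positivity
  have hlin : HasDerivAt (fun z => κ1 * (zCp - z)) (-κ1) zC := by
    simpa using ((hasDerivAt_id zC).const_sub zCp).const_mul κ1
  have hg : HasDerivAt (fun z => 1 / (κ1 * (zCp - z))) (1 / (κ1 * (zCp - zC) ^ 2)) zC := by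
    have h5 := hlin.inv hne
    have heq : -(-κ1) / (κ1 * (zCp - zC)) ^ 2 = 1 / (κ1 * (zCp - zC) ^ 2) := by
      field_simp
    rw [heq] at h5
    have hfun : (fun z => 1 / (κ1 * (zCp - z))) = (fun z => κ1 * (zCp - z))⁻¹ := by
      funext z
      simp [one_div]
    rw [hfun]
    exact h5
  have hmain : deriv (deriv F) zC = 1 / (κ1 * (zCp - zC) ^ 2) := by
    rw [hev.deriv_eq]
    exact hg.deriv
  refine ⟨hmain, ?_, ?_⟩
  · rw [hmain]; positivity
  · rw [hmain]
    rw [div_le_div_iff₀ (by positivity) (by positivity)]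
    have h6 := hgap zC hzC
    have h7 : κm1 ≤ 2 * κ1 * (zCp - zC) := by
      rw [div_le_iff₀ (by positivity)] at h6
      linarith
    nlinarith [hposC]
end

section
/- Fix κ₁>0, κ₋₁>0, K>0, z_V>0 and let F(z_V,z_C) = −(1/κ₁)[ln(z_C⁺(K,z_V) − z_C) − (1/2)ln(D(K,z_V)) + ln(κ₁)] for z_C ≤ z_V. Then there exists a constant C > 0 (depending only on κ₁, κ₋₁, K) such that |F(z_V,z_C)| ≤ C(1 + ln(1 + z_V + z_C)) for all 0 ≤ z_C ≤ z_V. -/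
/-!
With `A = (z_V + K) κ₁ + κ₋₁`, the discriminant satisfies
`D = ((z_V - K) κ₁ + κ₋₁)² + 4 K κ₁ κ₋₁ ≥ ((z_V - K) κ₁ + κ₋₁)²` and `κ₋₁² ≤ D ≤ A²`.
Hence `z_V + κ₋₁/κ₁ ≤ z_C⁺ ≤ A/κ₁`, so for `0 ≤ z_C ≤ z_V` both `z_C⁺ - z_C` and `√D` lie between
a positive constant and a constant multiple of `1 + z_V`; their logarithms are therefore
`O(1 + log (1 + z_V))`.
-/

open Real

lemma Real.abs_log_le_of_le_of_le_mul {a b x y : ℝ} (ha : 0 < a) (hax : a ≤ x) (hxb : x ≤ b * y)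
    (hy : 1 ≤ y) : |log x| ≤ |log a| + |log b| + log y := by
  have hx : 0 < x := ha.trans_le hax
  have hb : 0 < b := pos_of_mul_pos_left (hx.trans_le hxb) (by linarith)
  have hlow : log a ≤ log x := log_le_log ha hax
  have hupp : log x ≤ log b + log y := by
    rw [← log_mul hb.ne' (by positivity)]
    exact log_le_log hx hxb
  have := log_nonneg hy
  rw [abs_le]
  constructor <;> linarith [neg_abs_le (log a), le_abs_self (log b), abs_nonneg (log a),
    abs_nonneg (log b)]

namespace PoissonSolution

variable {κ1 κm1 K z : ℝ}

/-- The discriminant `D(K, z)`. -/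
def disc (κ1 κm1 K z : ℝ) : ℝ := ((z + K) * κ1 + κm1) ^ 2 - 4 * κ1 ^ 2 * z * K

/-- The larger root `z_C⁺(K, z)`. -/
noncomputable def rootPlus (κ1 κm1 K z : ℝ) : ℝ :=
  ((z + K) * κ1 + κm1 + √(disc κ1 κm1 K z)) / (2 * κ1)

lemma disc_eq_sq_add : disc κ1 κm1 K z = ((z - K) * κ1 + κm1) ^ 2 + 4 * K * κ1 * κm1 := by
  unfold disc; ring

lemma sq_le_disc (hκ1 : 0 ≤ κ1) (hκm1 : 0 ≤ κm1) (hK : 0 ≤ K) (hz : 0 ≤ z) :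
    κm1 ^ 2 ≤ disc κ1 κm1 K z := by
  have : disc κ1 κm1 K z = (κ1 * (z - K)) ^ 2 + 2 * κ1 * κm1 * (z + K) + κm1 ^ 2 := by
    unfold disc; ring
  rw [this]
  nlinarith [sq_nonneg (κ1 * (z - K)), mul_nonneg (mul_nonneg hκ1 hκm1) (add_nonneg hz hK)]

lemma disc_le_sq (hK : 0 ≤ K) (hz : 0 ≤ z) :
    disc κ1 κm1 K z ≤ ((z + K) * κ1 + κm1) ^ 2 := by
  unfold disc
  nlinarith [mul_nonneg (mul_nonneg (sq_nonneg κ1) hz) hK]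

lemma add_div_le_rootPlus (hκ1 : 0 < κ1) (hκm1 : 0 ≤ κm1) (hK : 0 ≤ K) :
    z + κm1 / κ1 ≤ rootPlus κ1 κm1 K z := by
  have hsqrt : (z - K) * κ1 + κm1 ≤ √(disc κ1 κm1 K z) :=
    (le_abs_self _).trans <| Real.abs_le_sqrt <| by
      rw [disc_eq_sq_add]
      nlinarith [mul_nonneg (mul_nonneg hK hκ1.le) hκm1]
  unfold rootPlus
  rw [le_div_iff₀ (by positivity)]
  have : (z + κm1 / κ1) * (2 * κ1) = 2 * z * κ1 + 2 * κm1 := by field_simp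
  linarith

lemma rootPlus_le (hκ1 : 0 < κ1) (hκm1 : 0 ≤ κm1) (hK : 0 ≤ K) (hz : 0 ≤ z) :
    rootPlus κ1 κm1 K z ≤ z + K + κm1 / κ1 := by
  have hsqrt : √(disc κ1 κm1 K z) ≤ (z + K) * κ1 + κm1 :=
    Real.sqrt_le_iff.mpr ⟨by positivity, disc_le_sq hK hz⟩
  unfold rootPlus
  rw [div_le_iff₀ (by positivity)]
  have : (z + K + κm1 / κ1) * (2 * κ1) = 2 * ((z + K) * κ1 + κm1) := by field_simp
  linarith

lemma exists_abs_log_rootPlus_sub_le (hκ1 : 0 < κ1) (hκm1 : 0 < κm1) (hK : 0 ≤ K) :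
    ∃ c, 0 ≤ c ∧ ∀ z zC : ℝ, 0 ≤ z → 0 ≤ zC → zC ≤ z →
      |log (rootPlus κ1 κm1 K z - zC)| ≤ c + log (1 + z) := by
  refine ⟨|log (κm1 / κ1)| + |log (K + κm1 / κ1 + 1)|, by positivity, fun z zC hz hzC hzCz => ?_⟩
  have hlow := add_div_le_rootPlus (z := z) hκ1 hκm1.le hK
  have hupp := rootPlus_le hκ1 hκm1.le hK hz
  apply Real.abs_log_le_of_le_of_le_mul (by positivity) (by linarith) _ (by linarith)
  nlinarith [mul_nonneg hz (add_nonneg hK (div_nonneg hκm1.le hκ1.le))]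

lemma exists_abs_log_disc_le (hκ1 : 0 < κ1) (hκm1 : 0 < κm1) (hK : 0 ≤ K) :
    ∃ c, 0 ≤ c ∧ ∀ z : ℝ, 0 ≤ z → |log (disc κ1 κm1 K z)| ≤ c + 2 * log (1 + z) := by
  refine ⟨|log (κm1 ^ 2)| + |log ((κ1 * (K + 1) + κm1) ^ 2)|, by positivity, fun z hz => ?_⟩
  have hA : (z + K) * κ1 + κm1 ≤ (κ1 * (K + 1) + κm1) * (1 + z) := by
    nlinarith [mul_nonneg (mul_nonneg hz hκ1.le) hK, mul_nonneg hz hκm1.le]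
  rw [show 2 * log (1 + z) = log ((1 + z) ^ 2) by rw [log_pow]; norm_num]
  refine Real.abs_log_le_of_le_of_le_mul (by positivity) (sq_le_disc hκ1.le hκm1.le hK hz) ?_
    (one_le_pow₀ (by linarith))
  rw [← mul_pow]
  exact (disc_le_sq hK hz).trans (pow_le_pow_left₀ (by positivity) hA 2)

end PoissonSolution

open PoissonSolution in
theorem poisson_solution_log_growth
    (κ1 κm1 K : ℝ) (hκ1 : 0 < κ1) (hκm1 : 0 < κm1) (hK : 0 < K) :
    ∃ C : ℝ, 0 < C ∧ ∀ zV : ℝ, 0 < zV → ∀ zC : ℝ, 0 ≤ zC → zC ≤ zV →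
      |-(1 / κ1) *
          (Real.log ((((zV + K) * κ1 + κm1 +
              Real.sqrt (((zV + K) * κ1 + κm1) ^ 2 - 4 * κ1 ^ 2 * zV * K)) / (2 * κ1)) - zC)
            - (1 / 2) * Real.log (((zV + K) * κ1 + κm1) ^ 2 - 4 * κ1 ^ 2 * zV * K)
            + Real.log κ1)|
        ≤ C * (1 + Real.log (1 + zV + zC)) := by
  obtain ⟨c₁, hc₁, hroot⟩ := exists_abs_log_rootPlus_sub_le hκ1 hκm1 hK.le
  obtain ⟨c₂, hc₂, hdisc⟩ := exists_abs_log_disc_le hκ1 hκm1 hK.le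
  refine ⟨(c₁ + c₂ / 2 + |log κ1| + 2) / κ1, by positivity, fun zV hzV zC hzC hzCV => ?_⟩
  change |-(1 / κ1) * (log (rootPlus κ1 κm1 K zV - zC) - 1 / 2 * log (disc κ1 κm1 K zV)
    + log κ1)| ≤ _
  set a := log (rootPlus κ1 κm1 K zV - zC)
  set d := log (disc κ1 κm1 K zV)
  set L := log (1 + zV + zC)
  have ha : |a| ≤ c₁ + log (1 + zV) := hroot zV zC hzV.le hzC hzCV
  have hd : |d| ≤ c₂ + 2 * log (1 + zV) := hdisc zV hzV.le
  have hL : log (1 + zV) ≤ L := log_le_log (by linarith) (by linarith)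
  have hL₀ : 0 ≤ log (1 + zV) := log_nonneg (by linarith)
  have hsum : |a - 1 / 2 * d + log κ1| ≤ (c₁ + c₂ / 2 + |log κ1| + 2) * (1 + L) := by
    calc _ ≤ |a| + |1 / 2 * d| + |log κ1| := (abs_add_le _ _).trans (by gcongr; exact abs_sub _ _)
      _ ≤ c₁ + c₂ / 2 + |log κ1| + 2 * L := by
          rw [abs_mul, abs_of_pos (by norm_num : (0 : ℝ) < 1 / 2)]
          linarith
      _ ≤ (c₁ + c₂ / 2 + |log κ1| + 2) * (1 + L) := by
          nlinarith [mul_nonneg (by positivity : 0 ≤ c₁ + c₂ / 2 + |log κ1|) (hL₀.trans hL)]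
  calc _ = |a - 1 / 2 * d + log κ1| / κ1 := by
        rw [abs_mul, abs_neg, abs_of_pos (by positivity)]; ring
    _ ≤ (c₁ + c₂ / 2 + |log κ1| + 2) * (1 + L) / κ1 := by gcongr
    _ = _ := by ring
end

section
/- Fix κ₁, κ₋₁, κ₂ > 0 and K₂ > 0. For each initial value Z_V(0) ≥ 0, the ODE dZ_V/dt = −κ₂ · ((Z_V+K₂)κ₁ + κ₋₁ − √(((Z_V+K₂)κ₁ + κ₋₁)² − 4κ₁²Z_V K₂))/(2κ₁) admits a unique solution on [0,T] for any T > 0, and the solution satisfies 0 ≤ Z_V(t) ≤ Z_V(0) for all t, with Z_V nonincreasing. -/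
open Set Real

/-- `u ↦ √(u² + c)` is 1-Lipschitz for `c ≥ 0`. -/
private lemma tQSSA_sqrt_sq_add_lip {c : ℝ} (hc : 0 ≤ c) (a b : ℝ) :
    |Real.sqrt (a ^ 2 + c) - Real.sqrt (b ^ 2 + c)| ≤ |a - b| := by
  set sa := Real.sqrt (a ^ 2 + c) with hsa
  set sb := Real.sqrt (b ^ 2 + c) with hsb
  have ha2 : sa ^ 2 = a ^ 2 + c := Real.sq_sqrt (by positivity)
  have hb2 : sb ^ 2 = b ^ 2 + c := Real.sq_sqrt (by positivity)
  have hsa0 : 0 ≤ sa := Real.sqrt_nonneg _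
  have hsb0 : 0 ≤ sb := Real.sqrt_nonneg _
  have key : a * b + c ≤ sa * sb := by
    rcases le_or_gt (a * b + c) 0 with h | h
    · exact h.trans (mul_nonneg hsa0 hsb0)
    · nlinarith [sq_nonneg (a - b), sq_nonneg (a * b + c), mul_nonneg hsa0 hsb0]
  have hsq : (sa - sb) ^ 2 ≤ (a - b) ^ 2 := by nlinarith
  calc |sa - sb| = Real.sqrt ((sa - sb) ^ 2) := (Real.sqrt_sq_eq_abs _).symm
    _ ≤ Real.sqrt ((a - b) ^ 2) := Real.sqrt_le_sqrt hsq
    _ = |a - b| := Real.sqrt_sq_eq_abs _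

/-- Local existence with a uniform time-step for globally Lipschitz autonomous ODEs. -/
private lemma tQSSA_local_ex {f : ℝ → ℝ} {K : NNReal} (hK : 0 < (K : ℝ))
    (hf : LipschitzWith K f) (s x₀ : ℝ) :
    ∃ Z : ℝ → ℝ, Z s = x₀ ∧
      ∀ t ∈ Ioo (s - 1 / (2 * K)) (s + 1 / (2 * K)), HasDerivAt Z (f (Z t)) t := by
  set δ : ℝ := 1 / (2 * (K : ℝ)) with hδ
  have hδ0 : 0 < δ := by positivity
  set R : ℝ := max (‖f x₀‖ / K) 1 with hR
  have hR0 : (0:ℝ) ≤ R := le_trans zero_le_one (le_max_right _ _)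
  set C : ℝ := ‖f x₀‖ + K * R with hC
  have hKR : ‖f x₀‖ ≤ (K : ℝ) * R := by
    rw [← div_le_iff₀' hK]
    exact le_max_left _ _
  have hpl : IsPicardLindelof (fun _ y => f y) (tmin := s - δ) (tmax := s + δ)
      ⟨s, ⟨by linarith, by linarith⟩⟩ x₀ ⟨R, hR0⟩ 0
      ⟨C, add_nonneg (norm_nonneg _) (mul_nonneg K.2 hR0)⟩ K :=
    IsPicardLindelof.of_time_independent
      (by
        intro x hx
        have hxx : ‖x - x₀‖ ≤ R := by
          rwa [← dist_eq_norm, ← Metric.mem_closedBall]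
        calc ‖f x‖ ≤ ‖f x₀‖ + ‖f x - f x₀‖ := by
              linarith [norm_sub_norm_le (f x) (f x₀)]
          _ ≤ ‖f x₀‖ + K * ‖x - x₀‖ := by linarith [hf.norm_sub_le x x₀]
          _ ≤ C := by nlinarith [K.2])
      hf.lipschitzOnWith
      (by
        show C * max (s + δ - s) (s - (s - δ)) ≤ R - 0
        have h1 : max (s + δ - s) (s - (s - δ)) = δ := by simp
        rw [h1, sub_zero, hδ, mul_one_div, div_le_iff₀ (by positivity)]
        nlinarith)
  obtain ⟨Z, h1, h2⟩ := hpl.exists_eq_forall_mem_Icc_hasDerivWithinAt₀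
  exact ⟨Z, h1, fun t ht =>
    (h2 t (Ioo_subset_Icc_self ht)).hasDerivAt (Icc_mem_nhds ht.1 ht.2)⟩

/-- Global existence on `[0, T]` for globally Lipschitz autonomous ODEs. -/
private lemma tQSSA_global_ex {f : ℝ → ℝ} {K : NNReal} (hK : 0 < (K : ℝ))
    (hf : LipschitzWith K f) (x₀ T : ℝ) :
    ∃ Z : ℝ → ℝ, Z 0 = x₀ ∧ ∀ t ∈ Icc 0 T, HasDerivAt Z (f (Z t)) t := by
  set δ : ℝ := 1 / (2 * (K : ℝ)) with hδdef
  have hδ0 : 0 < δ := by positivity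
  set δ' : ℝ := δ / 2 with hδ'def
  have hδ'0 : 0 < δ' := by positivity
  have main : ∀ n : ℕ, ∃ Z : ℝ → ℝ, Z 0 = x₀ ∧
      ∀ t ∈ Icc 0 ((n : ℝ) * δ'), HasDerivAt Z (f (Z t)) t := by
    intro n
    induction n with
    | zero =>
      obtain ⟨Z, hZ0, hZ⟩ := tQSSA_local_ex hK hf 0 x₀
      refine ⟨Z, hZ0, fun t ht => ?_⟩
      have ht0 : t = 0 := by
        simp only [Nat.cast_zero, zero_mul] at ht
        exact le_antisymm ht.2 ht.1
      subst ht0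
      exact hZ 0 ⟨by linarith, by linarith⟩
    | succ n ih =>
      obtain ⟨Z₁, hZ₁0, hZ₁⟩ := ih
      set s : ℝ := (n : ℝ) * δ' with hs
      have hs0 : 0 ≤ s := by positivity
      obtain ⟨Z₂, hZ₂s, hZ₂⟩ := tQSSA_local_ex hK hf s (Z₁ s)
      refine ⟨fun t => if t ≤ s then Z₁ t else Z₂ t, by simp only [if_pos hs0, hZ₁0],
        fun t ht => ?_⟩
      have htle : t ≤ s + δ' := by
        have h' : ((n + 1 : ℕ) : ℝ) * δ' = s + δ' := by push_cast [hs]; ring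
        rw [h'] at ht; exact ht.2
      have hδ'δ : δ' < δ := by rw [hδ'def]; linarith
      rcases lt_trichotomy t s with h | h | h
      · -- t < s
        have heq : (fun u => if u ≤ s then Z₁ u else Z₂ u) =ᶠ[nhds t] Z₁ := by
          filter_upwards [Iio_mem_nhds h] with u hu
          simp [(mem_Iio.mp hu).le]
        have : HasDerivAt (fun u => if u ≤ s then Z₁ u else Z₂ u) (f (Z₁ t)) t :=
          (hZ₁ t ⟨ht.1, h.le⟩).congr_of_eventuallyEq heq
        simpa [h.le] using this
      · -- t = s
        subst h
        have hd₁ : HasDerivWithinAt (fun u => if u ≤ s then Z₁ u else Z₂ u)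
            (f (Z₁ s)) (Iic s) s := by
          refine ((hZ₁ s ⟨hs0, le_refl _⟩).hasDerivWithinAt).congr ?_ (by simp)
          intro u hu; simp [mem_Iic.mp hu]
        have hd₂ : HasDerivWithinAt (fun u => if u ≤ s then Z₁ u else Z₂ u)
            (f (Z₁ s)) (Ici s) s := by
          have h2 := (hZ₂ s ⟨by linarith, by linarith⟩).hasDerivWithinAt (s := Ici s)
          rw [hZ₂s] at h2
          refine h2.congr ?_ (by simp [hZ₂s])
          intro u hu
          rcases eq_or_lt_of_le (mem_Ici.mp hu) with h' | h'
          · simp [← h', hZ₂s]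
          · simp [not_le.mpr h']
        have hu := hd₁.union hd₂
        rw [Iic_union_Ici, hasDerivWithinAt_univ] at hu
        simpa using hu
      · -- s < t
        have heq : (fun u => if u ≤ s then Z₁ u else Z₂ u) =ᶠ[nhds t] Z₂ := by
          filter_upwards [Ioi_mem_nhds h] with u hu
          simp [not_le.mpr (mem_Ioi.mp hu)]
        have : HasDerivAt (fun u => if u ≤ s then Z₁ u else Z₂ u) (f (Z₂ t)) t :=
          (hZ₂ t ⟨by linarith, by linarith⟩).congr_of_eventuallyEq heq
        simpa [not_le.mpr h] using this
  rcases le_or_gt T 0 with hT | hT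
  · obtain ⟨Z, hZ0, hZ⟩ := main 0
    refine ⟨Z, hZ0, fun t ht => hZ t ⟨ht.1, by simpa using le_trans ht.2 hT⟩⟩
  · obtain ⟨Z, hZ0, hZ⟩ := main ⌈T / δ'⌉₊
    refine ⟨Z, hZ0, fun t ht => hZ t ⟨ht.1, le_trans ht.2 ?_⟩⟩
    rw [← div_le_iff₀ hδ'0]
    exact Nat.le_ceil _

theorem tQSSA_limit_ODE_wellposed
    (κ1 κm1 κ2 K2 : ℝ) (hκ1 : 0 < κ1) (hκm1 : 0 < κm1) (hκ2 : 0 < κ2) (hK2 : 0 < K2) :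
    ∀ T : ℝ, 0 < T → ∀ zV0 : ℝ, 0 ≤ zV0 →
      ∃ Z : ℝ → ℝ,
        (Z 0 = zV0 ∧
          ∀ t ∈ Set.Icc (0:ℝ) T,
            HasDerivAt Z
              (-κ2 * (((Z t + K2) * κ1 + κm1 -
                  Real.sqrt (((Z t + K2) * κ1 + κm1) ^ 2 - 4 * κ1 ^ 2 * (Z t) * K2)) /
                  (2 * κ1))) t) ∧
        (∀ W : ℝ → ℝ, W 0 = zV0 →
          (∀ t ∈ Set.Icc (0:ℝ) T,
            HasDerivAt W
              (-κ2 * (((W t + K2) * κ1 + κm1 -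
                  Real.sqrt (((W t + K2) * κ1 + κm1) ^ 2 - 4 * κ1 ^ 2 * (W t) * K2)) /
                  (2 * κ1))) t) →
          Set.EqOn W Z (Set.Icc 0 T)) ∧
        (∀ t ∈ Set.Icc (0:ℝ) T, 0 ≤ Z t ∧ Z t ≤ zV0) ∧
        AntitoneOn Z (Set.Icc 0 T) := by
  intro T hT zV0 hzV0
  set F : ℝ → ℝ := fun z => -κ2 * (((z + K2) * κ1 + κm1 -
      Real.sqrt (((z + K2) * κ1 + κm1) ^ 2 - 4 * κ1 ^ 2 * z * K2)) / (2 * κ1)) with hF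
  -- the discriminant identity
  have hgid : ∀ z : ℝ, ((z + K2) * κ1 + κm1) ^ 2 - 4 * κ1 ^ 2 * z * K2
      = (κ1 * z + (κm1 - κ1 * K2)) ^ 2 + 4 * κ1 * κm1 * K2 := fun z => by ring
  have hc : (0:ℝ) ≤ 4 * κ1 * κm1 * K2 := by positivity
  -- the square root term is κ1-Lipschitz
  have hsqrt_lip : ∀ x y : ℝ,
      |Real.sqrt (((x + K2) * κ1 + κm1) ^ 2 - 4 * κ1 ^ 2 * x * K2) -
        Real.sqrt (((y + K2) * κ1 + κm1) ^ 2 - 4 * κ1 ^ 2 * y * K2)| ≤ κ1 * |x - y| := by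
    intro x y
    rw [hgid x, hgid y]
    have h := tQSSA_sqrt_sq_add_lip hc (κ1 * x + (κm1 - κ1 * K2)) (κ1 * y + (κm1 - κ1 * K2))
    have h2 : (κ1 * x + (κm1 - κ1 * K2)) - (κ1 * y + (κm1 - κ1 * K2)) = κ1 * (x - y) := by ring
    rwa [h2, abs_mul, abs_of_pos hκ1] at h
  -- F is κ2-Lipschitz
  have hlip : LipschitzWith κ2.toNNReal F := by
    apply LipschitzWith.of_dist_le_mul
    intro x y
    rw [Real.coe_toNNReal κ2 hκ2.le, Real.dist_eq, Real.dist_eq]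
    set Sx := Real.sqrt (((x + K2) * κ1 + κm1) ^ 2 - 4 * κ1 ^ 2 * x * K2) with hSx
    set Sy := Real.sqrt (((y + K2) * κ1 + κm1) ^ 2 - 4 * κ1 ^ 2 * y * K2) with hSy
    have hdiff : F x - F y = -κ2 / (2 * κ1) * (κ1 * (x - y) - (Sx - Sy)) := by
      simp only [hF]; rw [← hSx, ← hSy]; field_simp; ring
    rw [hdiff, abs_mul, abs_div, abs_neg, abs_of_pos hκ2, abs_of_pos (by positivity : (0:ℝ) < 2 * κ1)]
    have h1 : |κ1 * (x - y) - (Sx - Sy)| ≤ κ1 * |x - y| + κ1 * |x - y| := by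
      calc |κ1 * (x - y) - (Sx - Sy)| ≤ |κ1 * (x - y)| + |Sx - Sy| := abs_sub _ _
        _ ≤ κ1 * |x - y| + κ1 * |x - y| := by
            rw [abs_mul, abs_of_pos hκ1]
            exact add_le_add le_rfl (hsqrt_lip x y)
    calc κ2 / (2 * κ1) * |κ1 * (x - y) - (Sx - Sy)|
        ≤ κ2 / (2 * κ1) * (κ1 * |x - y| + κ1 * |x - y|) := by
          apply mul_le_mul_of_nonneg_left h1 (by positivity)
      _ = κ2 * |x - y| := by field_simp; ring
  have hKpos : (0:ℝ) < (κ2.toNNReal : ℝ) := by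
    rw [Real.coe_toNNReal κ2 hκ2.le]; exact hκ2
  -- F 0 = 0
  have hF0 : F 0 = 0 := by
    have h1 : ((0 + K2) * κ1 + κm1) ^ 2 - 4 * κ1 ^ 2 * 0 * K2 = ((0 + K2) * κ1 + κm1) ^ 2 := by
      ring
    rw [hF]
    simp only [h1, Real.sqrt_sq (by positivity : (0:ℝ) ≤ (0 + K2) * κ1 + κm1)]
    simp
  -- F z ≤ 0 for z ≥ 0
  have hFnonpos : ∀ z : ℝ, 0 ≤ z → F z ≤ 0 := by
    intro z hz
    have hA : (0:ℝ) ≤ (z + K2) * κ1 + κm1 := by positivity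
    have h1 : Real.sqrt (((z + K2) * κ1 + κm1) ^ 2 - 4 * κ1 ^ 2 * z * K2)
        ≤ (z + K2) * κ1 + κm1 := by
      calc Real.sqrt (((z + K2) * κ1 + κm1) ^ 2 - 4 * κ1 ^ 2 * z * K2)
          ≤ Real.sqrt (((z + K2) * κ1 + κm1) ^ 2) := by
            apply Real.sqrt_le_sqrt
            have h0 : (0:ℝ) ≤ 4 * κ1 ^ 2 * z * K2 := by positivity
            linarith
        _ = (z + K2) * κ1 + κm1 := Real.sqrt_sq hA
    have h2 : (0:ℝ) ≤ (((z + K2) * κ1 + κm1 -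
        Real.sqrt (((z + K2) * κ1 + κm1) ^ 2 - 4 * κ1 ^ 2 * z * K2)) / (2 * κ1)) :=
      div_nonneg (by linarith) (by positivity)
    rw [hF]
    exact mul_nonpos_of_nonpos_of_nonneg (by linarith) h2
  -- existence
  obtain ⟨Z, hZ0, hZd⟩ := tQSSA_global_ex hKpos hlip zV0 T
  -- nonnegativity
  have hnonneg : ∀ t ∈ Icc (0:ℝ) T, 0 ≤ Z t := by
    intro t₁ ht₁
    by_contra hneg
    push_neg at hneg
    set A : Set ℝ := Icc 0 t₁ ∩ Z ⁻¹' (Ici 0) with hA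
    have hcont : ContinuousOn Z (Icc 0 t₁) := fun u hu =>
      (hZd u ⟨hu.1, le_trans hu.2 ht₁.2⟩).continuousAt.continuousWithinAt
    have hclosed : IsClosed A := hcont.preimage_isClosed_of_isClosed isClosed_Icc isClosed_Ici
    have hne : A.Nonempty := ⟨0, ⟨le_refl _, ht₁.1⟩, by simp [hZ0, hzV0]⟩
    have hbdd : BddAbove A := ⟨t₁, fun x hx => hx.1.2⟩
    set s := sSup A with hsdef
    have hsA : s ∈ A := hclosed.csSup_mem hne hbdd
    have hs0 : 0 ≤ s := hsA.1.1
    have hst₁ : s < t₁ := by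
      rcases lt_or_eq_of_le hsA.1.2 with h | h
      · exact h
      · exfalso; rw [h] at hsA; exact absurd hsA.2 (by simpa using hneg)
    have hsT : s ∈ Icc (0:ℝ) T := ⟨hs0, le_trans hst₁.le ht₁.2⟩
    have hgt : ∀ u ∈ Ioc s t₁, Z u < 0 := by
      intro u hu
      by_contra hge
      push_neg at hge
      have : u ∈ A := ⟨⟨le_trans hs0 hu.1.le, hu.2⟩, hge⟩
      exact absurd (le_csSup hbdd this) (not_le.mpr hu.1)
    have hZs_le : Z s ≤ 0 := by
      have hcZ : Filter.Tendsto Z (nhdsWithin s (Ioi s)) (nhds (Z s)) :=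
        ((hZd s hsT).continuousAt).continuousWithinAt
      refine le_of_tendsto hcZ ?_
      filter_upwards [Ioc_mem_nhdsGT hst₁] with u hu using (hgt u hu).le
    have hZs : Z s = 0 := le_antisymm hZs_le hsA.2
    have heq : EqOn Z (fun _ => (0:ℝ)) (Icc s t₁) := by
      apply ODE_solution_unique (v := fun _ y => F y) (fun _ => hlip)
      · exact fun u hu =>
          (hZd u ⟨le_trans hs0 hu.1, le_trans hu.2 ht₁.2⟩).continuousAt.continuousWithinAt
      · exact fun u hu =>
          (hZd u ⟨le_trans hs0 hu.1, le_trans hu.2.le ht₁.2⟩).hasDerivWithinAt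
      · exact continuousOn_const
      · intro u hu
        simpa [hF0] using (hasDerivWithinAt_const u (Ici u) (0:ℝ))
      · simpa using hZs
    have : Z t₁ = 0 := heq ⟨hst₁.le, le_refl _⟩
    linarith
  -- antitone
  have hanti : AntitoneOn Z (Icc 0 T) := by
    apply antitoneOn_of_deriv_nonpos (convex_Icc 0 T)
    · exact fun t ht => (hZd t ht).continuousAt.continuousWithinAt
    · intro t ht
      rw [interior_Icc] at ht
      exact (hZd t (Ioo_subset_Icc_self ht)).differentiableAt.differentiableWithinAt
    · intro t ht
      rw [interior_Icc] at ht
      rw [(hZd t (Ioo_subset_Icc_self ht)).deriv]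
      exact hFnonpos _ (hnonneg t (Ioo_subset_Icc_self ht))
  refine ⟨Z, ⟨hZ0, fun t ht => hZd t ht⟩, ?_, ?_, hanti⟩
  · -- uniqueness
    intro W hW0 hWd
    apply ODE_solution_unique (v := fun _ y => F y) (fun _ => hlip)
    · exact fun t ht => (hWd t ht).continuousAt.continuousWithinAt
    · exact fun t ht => (hWd t (Ico_subset_Icc_self ht)).hasDerivWithinAt
    · exact fun t ht => (hZd t ht).continuousAt.continuousWithinAt
    · exact fun t ht => (hZd t (Ico_subset_Icc_self ht)).hasDerivWithinAt
    · rw [hW0, hZ0]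
  · intro t ht
    refine ⟨hnonneg t ht, ?_⟩
    have := hanti ⟨le_refl _, hT.le⟩ ht ht.1
    rwa [hZ0] at this
end
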